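/- Let h(t) = (1/2)(1−t)² log((1−t)²) + (1/2)(1+t)² log((1+t)²) − (1+t²) log(1+t²). Then for every t ∈ [0,1), (1−t²)·h'(t) ≥ t·h''(t), where h'(t) = 2((1+t) log(1+t) − (1−t) log(1−t) − t log(1+t²)) and h''(t) = 4/(1+t²) − 2 log((1+t²)/(1−t²)). -/

import Mathlib

/-!
Write `ℓ(x) = log ((1 + x) / (1 - x))`. Since `log (1 - t²) = log (1 + t) + log (1 - t)`, the
difference `(1 - t²) h'(t) - t h''(t)` equals `2 (1 - t²) ℓ(t) + 2 t³ ℓ(t²) - 4t / (1 + t²)`.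
The first term of the Taylor series of `ℓ` gives `ℓ(x) ≥ 2x` on `[0, 1)`, which bounds the
difference below by `4t (1 - t² + t⁴) - 4t / (1 + t²) = 4t⁷ / (1 + t²) ≥ 0`.
-/

/-- `h(t) = (1/2)(1−t)² log((1−t)²) + (1/2)(1+t)² log((1+t)²) − (1+t²) log(1+t²)`
(note `Real.log 0 = 0`). -/
noncomputable def hFun (t : ℝ) : ℝ :=
  (1 / 2) * (1 - t) ^ 2 * Real.log ((1 - t) ^ 2) +
    (1 / 2) * (1 + t) ^ 2 * Real.log ((1 + t) ^ 2) -
    (1 + t ^ 2) * Real.log (1 + t ^ 2)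

/-- The derivative of `h`:
`h'(t) = 2((1+t) log(1+t) − (1−t) log(1−t) − t log(1+t²))`. -/
noncomputable def hFun' (t : ℝ) : ℝ :=
  2 * ((1 + t) * Real.log (1 + t) - (1 - t) * Real.log (1 - t) -
    t * Real.log (1 + t ^ 2))

/-- The second derivative of `h`: `h''(t) = 4/(1+t²) − 2 log((1+t²)/(1−t²))`. -/
noncomputable def hFun'' (t : ℝ) : ℝ :=
  4 / (1 + t ^ 2) - 2 * Real.log ((1 + t ^ 2) / (1 - t ^ 2))

open Real

lemma mul_hFun'_sub_mul_hFun'' {t : ℝ} (h₁ : 1 + t ≠ 0) (h₂ : 1 - t ≠ 0) :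
    (1 - t ^ 2) * hFun' t - t * hFun'' t =
      2 * (1 - t ^ 2) * log ((1 + t) / (1 - t)) + 2 * t ^ 3 * log ((1 + t ^ 2) / (1 - t ^ 2)) -
        4 * t / (1 + t ^ 2) := by
  have hsq : 1 - t ^ 2 ≠ 0 := by
    rw [show 1 - t ^ 2 = (1 + t) * (1 - t) by ring]; exact mul_ne_zero h₁ h₂
  have hlog_sq : log (1 - t ^ 2) = log (1 + t) + log (1 - t) := by
    rw [← log_mul h₁ h₂]; ring_nf
  rw [hFun', hFun'', log_div h₁ h₂, log_div (by positivity) hsq, hlog_sq]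
  ring

lemma two_mul_le_log_one_add_div_one_sub {x : ℝ} (hx₀ : 0 ≤ x) (hx₁ : x < 1) :
    2 * x ≤ log ((1 + x) / (1 - x)) := by
  have := sum_range_le_log_div hx₀ hx₁ 1
  norm_num at this
  linarith

/-- For every `t ∈ [0,1)`, `(1−t²)·h'(t) ≥ t·h''(t)`. -/
theorem hFun_derivative_inequality :
    ∀ t ∈ Set.Ico (0 : ℝ) 1, (1 - t ^ 2) * hFun' t ≥ t * hFun'' t := by
  rintro t ⟨ht₀, ht₁⟩
  have hlin := two_mul_le_log_one_add_div_one_sub ht₀ ht₁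
  have hquad := two_mul_le_log_one_add_div_one_sub (sq_nonneg t) (by nlinarith)
  have hrational :
      4 * t / (1 + t ^ 2) = 4 * t * (1 - t ^ 2 + t ^ 4) - 4 * t ^ 7 / (1 + t ^ 2) := by
    field_simp; ring
  have hremainder : 0 ≤ 4 * t ^ 7 / (1 + t ^ 2) := by positivity
  rw [ge_iff_le, ← sub_nonneg, mul_hFun'_sub_mul_hFun'' (by linarith) (by linarith), hrational]
  linarith [mul_le_mul_of_nonneg_left hlin (by nlinarith : (0 : ℝ) ≤ 1 - t ^ 2),
    mul_le_mul_of_nonneg_left hquad (pow_nonneg ht₀ 3)]
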